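/- arXiv:1202.0471 — 7 statements merged into one kernel-verified Lean document; each statement's English description precedes it below -/
import Mathlib

section
/- Let K be a field and m ≥ 2 an integer not divisible by the characteristic of K. If u, v ∈ K[x] satisfy u^m - v^m = c for a nonzero constant c, and K contains a primitive m-th root of unity, then u and v are both constant polynomials. -/
open Polynomial

/-- Field identity: `a^m - b^m = ∏ (a - f μ * b)` over the `m`-th roots of unity of `K`. -/
lemma aux_pow_sub_pow {K L : Type*} [Field K] [Field L] (f : K →+* L)
    (m : ℕ) (hm : 0 < m) {ζ : K} (hζ : IsPrimitiveRoot ζ m) (a b : L) :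
    a ^ m - b ^ m = ∏ μ ∈ nthRootsFinset m (1 : K), (a - f μ * b) := by
  by_cases hb : b = 0
  · subst hb
    simp [Finset.prod_const, hζ.card_nthRootsFinset, hm.ne']
  · have h1 : (a / b) ^ m - 1 = ∏ μ ∈ nthRootsFinset m (1 : K), (a / b - f μ) := by
      have := congrArg (eval₂ f (a / b)) (X_pow_sub_one_eq_prod hm hζ)
      simpa [eval₂_finset_prod] using this
    have h2 : b ^ m * ((a / b) ^ m - 1) = a ^ m - b ^ m := by
      rw [div_pow, mul_sub, mul_div_cancel₀ _ (pow_ne_zero _ hb), mul_one]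
    have h3 : ∏ μ ∈ nthRootsFinset m (1 : K), (b * (a / b - f μ))
        = b ^ m * ∏ μ ∈ nthRootsFinset m (1 : K), (a / b - f μ) := by
      rw [Finset.prod_mul_distrib, Finset.prod_const, hζ.card_nthRootsFinset]
    rw [← h2, h1, ← h3]
    refine Finset.prod_congr rfl fun μ _ => ?_
    field_simp

theorem stmt_0 {K : Type*} [Field K] (m : ℕ) (hm : 2 ≤ m) (hchar : (m : K) ≠ 0)
    (ζ : K) (hζ : IsPrimitiveRoot ζ m)
    (u v : K[X]) (c : K) (hc : c ≠ 0) (h : u ^ m - v ^ m = C c) :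
    (∃ a : K, u = C a) ∧ (∃ b : K, v = C b) := by
  have hm0 : 0 < m := by omega
  -- factorization in K[X]
  have hfact : u ^ m - v ^ m = ∏ μ ∈ nthRootsFinset m (1 : K), (u - C μ * v) := by
    have hinj : Function.Injective (algebraMap K[X] (RatFunc K)) :=
      (RingHom.injective_iff_ker_eq_bot (f := algebraMap K[X] (RatFunc K))).mpr
        (by ext x; simp [RingHom.mem_ker, FaithfulSMul.algebraMap_eq_zero_iff])
    apply hinj
    have := aux_pow_sub_pow ((algebraMap K[X] (RatFunc K)).comp (C : K →+* K[X]))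
      m hm0 hζ (algebraMap K[X] (RatFunc K) u) (algebraMap K[X] (RatFunc K) v)
    simpa [map_pow, map_sub, map_prod, map_mul] using this
  rw [h] at hfact
  -- each factor is a unit, hence a constant
  have hconst : ∀ μ ∈ nthRootsFinset m (1 : K), ∃ d : K, u - C μ * v = C d := by
    intro μ hμ
    have hdvd : (u - C μ * v) ∣ C c := hfact ▸ Finset.dvd_prod_of_mem _ hμ
    have hu : IsUnit (u - C μ * v) :=
      isUnit_of_dvd_unit hdvd (isUnit_C.mpr hc.isUnit)
    obtain ⟨d, _, hd⟩ := Polynomial.isUnit_iff.mp hu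
    exact ⟨d, hd.symm⟩
  obtain ⟨d1, hd1⟩ := hconst 1 ((mem_nthRootsFinset hm0 (1 : K)).mpr (one_pow m))
  obtain ⟨d2, hd2⟩ := hconst ζ (hζ.mem_nthRootsFinset hm0)
  have hζ1 : ζ ≠ 1 := hζ.ne_one (by omega)
  rw [map_one, one_mul] at hd1
  have hne : ζ - 1 ≠ 0 := sub_ne_zero.mpr hζ1
  have hkey : C (ζ - 1) * v = C (d1 - d2) := by
    rw [map_sub, map_sub, map_one]
    linear_combination hd1 - hd2
  have hv : v = C ((d1 - d2) / (ζ - 1)) := by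
    apply mul_left_cancel₀ (show (C (ζ - 1) : K[X]) ≠ 0 from C_ne_zero.mpr hne)
    rw [hkey, ← C_mul, mul_div_cancel₀ _ hne]
  refine ⟨⟨d1 + (d1 - d2) / (ζ - 1), ?_⟩, ⟨_, hv⟩⟩
  rw [C_add, ← hv]
  linear_combination hd1
end

section
/- Let K be a field of characteristic ≠ 2. Every solution (P, Q) ∈ K[x] × K[x] of the polynomial Pell equation P(x)^2 - (x^2 - 1) Q(x)^2 = 1 is of the form P = ± T_n and Q = ± U_{n-1} for some n ≥ 0 (with the convention U_{-1} = 0), where T_n and U_n are the Chebyshev polynomials of the first and second kind. -/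
open Polynomial

private theorem pell_aux {K : Type*} [Field K] (hchar : (2 : K) ≠ 0) :
    ∀ d : ℕ, ∀ P Q : K[X], Q.natDegree < d → P ^ 2 - (X ^ 2 - 1) * Q ^ 2 = 1 →
      ∃ z : ℤ, (P = Chebyshev.T K z ∨ P = -Chebyshev.T K z) ∧
        (Q = Chebyshev.U K (z - 1) ∨ Q = -Chebyshev.U K (z - 1)) := by
  intro d
  induction d with
  | zero => intro P Q hd; omega
  | succ d ih =>
    intro P Q hd h
    by_cases hQ : Q = 0
    · subst hQ
      have h1 : (P - 1) * (P + 1) = 0 := by linear_combination h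
      refine ⟨0, ?_, Or.inl ?_⟩
      · rcases mul_eq_zero.1 h1 with h2 | h2
        · exact Or.inl (by rw [Chebyshev.T_zero]; linear_combination h2)
        · exact Or.inr (by rw [Chebyshev.T_zero]; linear_combination h2)
      · simp [Chebyshev.U_neg_one]
    · -- degree and leading coefficient facts
      have hX2 : (X ^ 2 - 1 : K[X]) ≠ 0 := by
        intro hz
        have : ((X ^ 2 - 1 : K[X])).natDegree = 2 := by compute_degree!
        rw [hz, natDegree_zero] at this; omega
      have hQ2 : (Q ^ 2 : K[X]) ≠ 0 := pow_ne_zero 2 hQ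
      have hX2d : (X ^ 2 - 1 : K[X]).natDegree = 2 := by compute_degree!
      have hM0 : (X ^ 2 - 1) * Q ^ 2 ≠ 0 := mul_ne_zero hX2 hQ2
      have hMdeg : ((X ^ 2 - 1) * Q ^ 2).natDegree = 2 + 2 * Q.natDegree := by
        rw [natDegree_mul hX2 hQ2, hX2d, natDegree_pow]
      have hM : P ^ 2 = 1 + (X ^ 2 - 1) * Q ^ 2 := by linear_combination h
      have hdlt : (1 : K[X]).degree < ((X ^ 2 - 1) * Q ^ 2).degree := by
        rw [degree_one, degree_eq_natDegree hM0, hMdeg]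
        exact_mod_cast (by omega : 0 < 2 + 2 * Q.natDegree)
      have hP2deg : (P ^ 2).natDegree = 2 + 2 * Q.natDegree := by
        rw [hM, natDegree_add_eq_right_of_natDegree_lt, hMdeg]
        rw [natDegree_one, hMdeg]; omega
      have hPdeg : P.natDegree = Q.natDegree + 1 := by
        have := hP2deg; rw [natDegree_pow] at this; omega
      have hlc2 : P.leadingCoeff ^ 2 = Q.leadingCoeff ^ 2 := by
        have e1 : (P ^ 2).leadingCoeff = ((X ^ 2 - 1) * Q ^ 2).leadingCoeff := by
          rw [hM]; exact leadingCoeff_add_of_degree_lt hdlt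
        rw [leadingCoeff_pow] at e1
        rw [e1, leadingCoeff_mul, leadingCoeff_pow]
        have : (X ^ 2 - 1 : K[X]).leadingCoeff = 1 := by
          have : (X ^ 2 - 1 : K[X]) = X ^ 2 - C 1 := by simp
          rw [this]; exact (monic_X_pow_sub_C (1 : K) (by norm_num)).leadingCoeff
        rw [this, one_mul]
      have hlc : P.leadingCoeff = Q.leadingCoeff ∨ P.leadingCoeff = -Q.leadingCoeff := by
        have : (P.leadingCoeff - Q.leadingCoeff) * (P.leadingCoeff + Q.leadingCoeff) = 0 := by
          linear_combination hlc2
        rcases mul_eq_zero.1 this with h2 | h2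
        · exact Or.inl (sub_eq_zero.1 h2)
        · exact Or.inr (eq_neg_of_add_eq_zero_left h2)
      -- WLOG leading coefficients agree
      suffices key : ∀ P : K[X], P ^ 2 - (X ^ 2 - 1) * Q ^ 2 = 1 →
          P.natDegree = Q.natDegree + 1 → P.leadingCoeff = Q.leadingCoeff →
          ∃ z : ℤ, (P = Chebyshev.T K z ∨ P = -Chebyshev.T K z) ∧
            (Q = Chebyshev.U K (z - 1) ∨ Q = -Chebyshev.U K (z - 1)) by
        rcases hlc with hl | hl
        · exact key P h hPdeg hl
        · obtain ⟨z, hP, hQc⟩ := key (-P) (by linear_combination h)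
            (by rw [natDegree_neg]; exact hPdeg)
            (by rw [leadingCoeff_neg, hl]; ring)
          refine ⟨z, ?_, hQc⟩
          rcases hP with hP | hP
          · exact Or.inr (by linear_combination -hP)
          · exact Or.inl (by linear_combination -hP)
      clear hlc hlc2 hPdeg hP2deg hM hdlt h
      intro P h hPdeg hl
      have h' : (X * P - (X ^ 2 - 1) * Q) ^ 2 - (X ^ 2 - 1) * (X * Q - P) ^ 2 = 1 := by
        linear_combination h
      by_cases hQ'0 : X * Q - P = 0
      · have hPX : P = X * Q := by linear_combination -hQ'0
        subst hPX
        have h1 : (Q - 1) * (Q + 1) = 0 := by linear_combination h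
        rcases mul_eq_zero.1 h1 with h2 | h2
        · have hQ1 : Q = 1 := sub_eq_zero.1 h2
          refine ⟨1, Or.inl ?_, Or.inl ?_⟩
          · rw [hQ1, Chebyshev.T_one]; ring
          · rw [hQ1]; norm_num [Chebyshev.U_zero]
        · have hQ1 : Q = -1 := eq_neg_of_add_eq_zero_left h2
          refine ⟨1, Or.inr ?_, Or.inr ?_⟩
          · rw [hQ1, Chebyshev.T_one]; ring
          · rw [hQ1]; norm_num [Chebyshev.U_zero]
      · -- descent step
        have hc : (P + X * Q).coeff (Q.natDegree + 1) = 2 * Q.leadingCoeff := by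
          rw [coeff_add, coeff_X_mul, ← hPdeg, coeff_natDegree, hl, coeff_natDegree]; ring
        have h2l : (2 : K) * Q.leadingCoeff ≠ 0 :=
          mul_ne_zero hchar (leadingCoeff_ne_zero.mpr hQ)
        have hdeg1 : (P + X * Q).natDegree = Q.natDegree + 1 := by
          apply le_antisymm
          · refine le_trans (natDegree_add_le _ _) ?_
            rw [hPdeg, natDegree_mul X_ne_zero hQ, natDegree_X]; omega
          · exact le_natDegree_of_ne_zero (by rw [hc]; exact h2l)
        have hPXQ : P + X * Q ≠ 0 := by
          intro hz; rw [hz, natDegree_zero] at hdeg1; omega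
        have hmul : (X * Q - P) * (P + X * Q) = Q ^ 2 - 1 := by linear_combination -h
        have hdQ' : (X * Q - P).natDegree + (Q.natDegree + 1) = (Q ^ 2 - 1).natDegree := by
          rw [← hdeg1, ← natDegree_mul hQ'0 hPXQ, hmul]
        have hle : (Q ^ 2 - 1).natDegree ≤ 2 * Q.natDegree := by
          refine le_trans (natDegree_sub_le _ _) ?_
          simp [natDegree_pow]
        have hlt : (X * Q - P).natDegree < d := by omega
        obtain ⟨z, hP', hQc'⟩ := ih (X * P - (X ^ 2 - 1) * Q) (X * Q - P) hlt h'
        have hPrec : P = X * (X * P - (X ^ 2 - 1) * Q) + (X ^ 2 - 1) * (X * Q - P) := by ring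
        have hQrec : Q = X * (X * Q - P) + (X * P - (X ^ 2 - 1) * Q) := by ring
        -- Chebyshev identities
        have idT1 : X * Chebyshev.T K z + (X ^ 2 - 1) * Chebyshev.U K (z - 1)
            = Chebyshev.T K (z + 1) := by
          have h1 := Chebyshev.T_eq_X_mul_T_sub_pol_U K (z - 1)
          rw [show z - 1 + 2 = z + 1 by ring, show z - 1 + 1 = z by ring] at h1
          linear_combination -h1
        have idT2 : X * Chebyshev.T K z - (X ^ 2 - 1) * Chebyshev.U K (z - 1)
            = Chebyshev.T K (z - 1) := by
          have h2 := Chebyshev.T_sub_one K z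
          linear_combination -h2 - idT1
        have idU1 : X * Chebyshev.U K (z - 1) + Chebyshev.T K z = Chebyshev.U K z := by
          have h1 := Chebyshev.U_eq_X_mul_U_add_T K (z - 1)
          rw [show z - 1 + 1 = z by ring] at h1
          linear_combination -h1
        have idU2 : X * Chebyshev.U K (z - 1) - Chebyshev.T K z = Chebyshev.U K (z - 2) := by
          have h2 := Chebyshev.U_sub_two K z
          linear_combination -h2 - idU1
        rcases hP' with hP' | hP' <;> rcases hQc' with hQc' | hQc'
        · refine ⟨z + 1, Or.inl ?_, Or.inl ?_⟩
          · rw [hPrec, hP', hQc']; linear_combination idT1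
          · rw [show z + 1 - 1 = z by ring, hQrec, hP', hQc']; linear_combination idU1
        · refine ⟨z - 1, Or.inl ?_, Or.inr ?_⟩
          · rw [hPrec, hP', hQc']; linear_combination idT2
          · rw [show z - 1 - 1 = z - 2 by ring, hQrec, hP', hQc']; linear_combination -idU2
        · refine ⟨z - 1, Or.inr ?_, Or.inl ?_⟩
          · rw [hPrec, hP', hQc']; linear_combination -idT2
          · rw [show z - 1 - 1 = z - 2 by ring, hQrec, hP', hQc']; linear_combination idU2
        · refine ⟨z + 1, Or.inr ?_, Or.inr ?_⟩
          · rw [hPrec, hP', hQc']; linear_combination -idT1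
          · rw [show z + 1 - 1 = z by ring, hQrec, hP', hQc']; linear_combination -idU1

theorem stmt_2 {K : Type*} [Field K] (hchar : (2 : K) ≠ 0)
    (P Q : K[X]) (h : P ^ 2 - (X ^ 2 - 1) * Q ^ 2 = 1) :
    ∃ n : ℕ, (P = Chebyshev.T K n ∨ P = -Chebyshev.T K n) ∧
      (Q = Chebyshev.U K ((n : ℤ) - 1) ∨ Q = -Chebyshev.U K ((n : ℤ) - 1)) := by
  obtain ⟨z, hP, hQ⟩ := pell_aux hchar (Q.natDegree + 1) P Q (Nat.lt_succ_self _) h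
  rcases le_or_gt 0 z with hz | hz
  · refine ⟨z.toNat, ?_, ?_⟩ <;> rw [Int.toNat_of_nonneg hz]
    · exact hP
    · exact hQ
  · refine ⟨(-z).toNat, ?_, ?_⟩ <;> rw [Int.toNat_of_nonneg (by omega : (0:ℤ) ≤ -z)]
    · rw [Chebyshev.T_neg]; exact hP
    · rw [show -z - 1 = -z - 1 from rfl, Chebyshev.U_neg_sub_one, neg_neg]
      exact hQ.symm
end

section
/- Let K be a field, m ≥ 2 an integer not divisible by char(K), f ∈ K[x] nonconstant and separable, g ∈ K[x] with deg g ≥ 2 and g' ≠ 0, and h ∈ K[x] such that f(g(x)) = f(x) h(x)^m. Then deg f ≤ 2. -/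
open Polynomial

private lemma sum_count_le {α : Type*} [DecidableEq α] (S : Finset α) (M : Multiset α) :
    ∑ x ∈ S, M.count x ≤ Multiset.card M := by
  calc ∑ x ∈ S, M.count x ≤ ∑ x ∈ S ∪ M.toFinset, M.count x :=
        Finset.sum_le_sum_of_subset Finset.subset_union_left
    _ = ∑ x ∈ M.toFinset, M.count x := by
        refine (Finset.sum_subset Finset.subset_union_right ?_).symm
        intro x _ hx
        simpa [Multiset.count_eq_zero] using hx
    _ = Multiset.card M := M.toFinset_sum_count_eq

theorem stmt_3 {K : Type*} [Field K] (m : ℕ) (hm : 2 ≤ m) (hchar : (m : K) ≠ 0)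
    (f g h : K[X]) (hf : f.Separable) (hfd : 0 < f.natDegree)
    (hg : 2 ≤ g.natDegree) (hg' : derivative g ≠ 0)
    (heq : f.comp g = f * h ^ m) :
    f.natDegree ≤ 2 := by
  classical
  set A := AlgebraicClosure K
  set φ : K →+* A := algebraMap K A
  set F : A[X] := f.map φ with hFdef
  set G : A[X] := g.map φ with hGdef
  set H : A[X] := h.map φ with hHdef
  set d := f.natDegree with hd
  set e := g.natDegree with he
  have hFsep : F.Separable := hf.map
  have hFd : F.natDegree = d := natDegree_map φ
  have hGd : G.natDegree = e := natDegree_map φ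
  have hFne : F ≠ 0 := hFsep.ne_zero
  have hGder : derivative G = (derivative g).map φ := derivative_map g φ
  have hGder_ne : derivative G ≠ 0 := by
    rw [hGder]
    exact (Polynomial.map_ne_zero_iff φ.injective).2 hg'
  have heqA : F.comp G = F * H ^ m := by
    have := congrArg (Polynomial.map φ) heq
    simpa [Polynomial.map_comp, Polynomial.map_mul, Polynomial.map_pow] using this
  -- F.comp G ≠ 0
  have hde : (F.comp G).natDegree = d * e := by rw [natDegree_comp, hFd, hGd]
  have hFG_ne : F.comp G ≠ 0 := by
    intro h0
    rw [h0, natDegree_zero] at hde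
    have : 0 < d * e := Nat.mul_pos hfd (lt_of_lt_of_le (by norm_num) hg)
    omega
  have hH_ne : H ≠ 0 := by
    intro h0
    rw [heqA, h0, zero_pow (by omega), mul_zero] at hFG_ne
    exact hFG_ne rfl
  -- derivative F ≠ 0
  have hFder_ne : derivative F ≠ 0 := by
    intro h0
    obtain ⟨a, b, hab⟩ := hFsep
    rw [h0, mul_zero, add_zero] at hab
    have : IsUnit F := isUnit_of_mul_isUnit_right (hab ▸ isUnit_one)
    have := natDegree_eq_zero_of_isUnit this
    omega
  have hGnotC : G ≠ C (G.coeff 0) := by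
    intro h0
    have : G.natDegree = 0 := by rw [h0]; exact natDegree_C _
    omega
  have hFderG_ne : (derivative F).comp G ≠ 0 := by
    intro h0
    rcases comp_eq_zero_iff.1 h0 with h1 | h1
    · exact hFder_ne h1
    · exact hGnotC h1.2
  have hFGder_ne : derivative (F.comp G) ≠ 0 := by
    rw [derivative_comp]
    exact mul_ne_zero hGder_ne hFderG_ne
  -- key lemma: each root's multiplicity ≤ 1 + mult in G'
  have key1 : ∀ β ∈ (F.comp G).roots, rootMultiplicity β (F.comp G)
      ≤ 1 + rootMultiplicity β (derivative G) := by
    intro β hβ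
    have hroot : F.eval (G.eval β) = 0 := by
      have := (mem_roots hFG_ne).1 hβ
      simpa [IsRoot, eval_comp] using this
    have hder_eval : (derivative F).eval (G.eval β) ≠ 0 := by
      have := hFsep.eval₂_derivative_ne_zero (RingHom.id A)
        (x := G.eval β) (by simpa [eval₂_eq_eval_map] using hroot)
      simpa [eval₂_eq_eval_map] using this
    have h1 : rootMultiplicity β (F.comp G) - 1
        ≤ rootMultiplicity β (derivative (F.comp G)) :=
      rootMultiplicity_sub_one_le_derivative_rootMultiplicity_of_ne_zero _ _ hFGder_ne
    have h2 : rootMultiplicity β (derivative (F.comp G))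
        = rootMultiplicity β ((derivative F).comp G) + rootMultiplicity β (derivative G) := by
      rw [derivative_comp, rootMultiplicity_mul (mul_ne_zero hGder_ne hFderG_ne)]
      omega
    have h3 : rootMultiplicity β ((derivative F).comp G) = 0 := by
      apply rootMultiplicity_eq_zero
      simpa [IsRoot, eval_comp] using hder_eval
    have hpos : 1 ≤ rootMultiplicity β (F.comp G) :=
      (rootMultiplicity_pos hFG_ne).2 ((mem_roots hFG_ne).1 hβ)
    omega
  -- multiplicities in F * H^m
  have key2 : ∀ β ∈ (F.comp G).roots, F.eval β ≠ 0 →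
      2 ≤ rootMultiplicity β (F.comp G) := by
    intro β hβ hFβ
    have hpow : rootMultiplicity β (H ^ m) = m * rootMultiplicity β H := by
      rw [← count_roots, roots_pow, Multiset.count_nsmul, count_roots]
    have h0 : rootMultiplicity β (F.comp G)
        = rootMultiplicity β F + m * rootMultiplicity β H := by
      rw [heqA, rootMultiplicity_mul (heqA ▸ hFG_ne), hpow]
    have h1 : rootMultiplicity β F = 0 := rootMultiplicity_eq_zero hFβ
    have hpos : 1 ≤ rootMultiplicity β (F.comp G) :=
      (rootMultiplicity_pos hFG_ne).2 ((mem_roots hFG_ne).1 hβ)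
    have hH1 : 1 ≤ rootMultiplicity β H := by
      by_contra hc
      push_neg at hc
      have h' : rootMultiplicity β H = 0 := by omega
      rw [h', mul_zero] at h0
      omega
    calc 2 ≤ m := hm
      _ ≤ m * rootMultiplicity β H := Nat.le_mul_of_pos_right m hH1
      _ ≤ rootMultiplicity β (F.comp G) := by omega
  set S : Finset A := (F.comp G).roots.toFinset with hS
  -- counting
  have hsplits : ((F.comp G)).roots.card = d * e := by
    rw [← hde]
    exact (splits_iff_card_roots.1 (IsAlgClosed.splits _))
  have hsum : ∑ β ∈ S, rootMultiplicity β (F.comp G) = d * e := by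
    rw [← hsplits, ← Multiset.toFinset_sum_count_eq]
    exact Finset.sum_congr rfl fun β _ => (count_roots _).symm
  -- bound the sum
  have hbound1 : ∑ β ∈ S, rootMultiplicity β (F.comp G)
      ≤ S.card + ∑ β ∈ S, rootMultiplicity β (derivative G) := by
    calc ∑ β ∈ S, rootMultiplicity β (F.comp G)
        ≤ ∑ β ∈ S, (1 + rootMultiplicity β (derivative G)) := by
          apply Finset.sum_le_sum
          intro β hβ
          exact key1 β (Multiset.mem_toFinset.1 hβ)
      _ = S.card + ∑ β ∈ S, rootMultiplicity β (derivative G) := by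
          rw [Finset.sum_add_distrib, Finset.sum_const, smul_eq_mul, mul_one]
  have hGdeg_ne : G.natDegree ≠ 0 := by omega
  have hG'deg : (derivative G).natDegree ≤ e - 1 := by
    have := natDegree_derivative_lt hGdeg_ne
    omega
  have hbound2 : ∑ β ∈ S, rootMultiplicity β (derivative G) ≤ e - 1 := by
    calc ∑ β ∈ S, rootMultiplicity β (derivative G)
        = ∑ β ∈ S, (derivative G).roots.count β :=
          Finset.sum_congr rfl fun β _ => (count_roots _).symm
      _ ≤ Multiset.card (derivative G).roots := sum_count_le _ _
      _ ≤ (derivative G).natDegree := card_roots' _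
      _ ≤ e - 1 := hG'deg
  -- S.card ≤ d + (e-1)
  have hScard : S.card ≤ d + (e - 1) := by
    have hsub : S ⊆ F.roots.toFinset ∪ (derivative G).roots.toFinset := by
      intro β hβ
      have hβ' := Multiset.mem_toFinset.1 hβ
      by_cases hFβ : F.eval β = 0
      · exact Finset.mem_union_left _ (Multiset.mem_toFinset.2
          ((mem_roots hFne).2 hFβ))
      · refine Finset.mem_union_right _ (Multiset.mem_toFinset.2
          ((mem_roots hGder_ne).2 ?_))
        have h2 := key2 β hβ' hFβ
        have h1 := key1 β hβ'
        have : 1 ≤ rootMultiplicity β (derivative G) := by omega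
        exact (rootMultiplicity_pos hGder_ne).1 (by omega)
    calc S.card ≤ (F.roots.toFinset ∪ (derivative G).roots.toFinset).card :=
          Finset.card_le_card hsub
      _ ≤ F.roots.toFinset.card + (derivative G).roots.toFinset.card :=
          Finset.card_union_le _ _
      _ ≤ Multiset.card F.roots + Multiset.card (derivative G).roots :=
          Nat.add_le_add (Multiset.toFinset_card_le _) (Multiset.toFinset_card_le _)
      _ ≤ F.natDegree + (derivative G).natDegree :=
          Nat.add_le_add (card_roots' _) (card_roots' _)
      _ ≤ d + (e - 1) := by rw [hFd]; omega
  -- combine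
  have hmain : d * e ≤ d + (e - 1) + (e - 1) := by
    calc d * e = ∑ β ∈ S, rootMultiplicity β (F.comp G) := hsum.symm
      _ ≤ S.card + ∑ β ∈ S, rootMultiplicity β (derivative G) := hbound1
      _ ≤ d + (e - 1) + (e - 1) := Nat.add_le_add hScard hbound2
  -- arithmetic
  have hde1 : d * (e - 1) ≤ 2 * (e - 1) := by
    have he1 : e = (e - 1) + 1 := by omega
    have hsplit : d * e = d * (e - 1) + d := by
      calc d * e = d * ((e - 1) + 1) := by rw [← he1]
        _ = d * (e - 1) + d := Nat.mul_succ _ _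
    omega
  exact Nat.le_of_mul_le_mul_right hde1 (by omega : 0 < e - 1)
end

section
/- Let K be a field of characteristic ≠ 2, f(x) = a x^2 + b x + c ∈ K[x] with a ≠ 0 and discriminant D = b^2 - 4ac ≠ 0, and suppose √D ∈ K. For every n ≥ 1 and each choice of signs ε, δ ∈ {+1, -1}, the polynomials g(x) = (ε T_n((2ax+b)/√D) √D - b)/(2a) and h(x) = δ U_{n-1}((2ax+b)/√D) satisfy f(g(x)) = f(x) h(x)^2. -/
open Polynomial

private theorem cheb_pell (R : Type*) [CommRing R] (n : ℤ) :
    (Chebyshev.T R n) ^ 2 - (X ^ 2 - 1) * (Chebyshev.U R (n - 1)) ^ 2 = 1 ∧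
    Chebyshev.T R n * Chebyshev.T R (n - 1) -
      (X ^ 2 - 1) * (Chebyshev.U R (n - 1) * Chebyshev.U R (n - 2)) = X := by
  induction n using Polynomial.Chebyshev.induct with
  | zero =>
      constructor <;>
        simp [Chebyshev.U_neg_one, Chebyshev.U_neg_two, Chebyshev.T_neg_one]
  | one =>
      constructor <;> simp [Chebyshev.U_neg_one]
  | add_two n ih1 ih2 =>
      obtain ⟨p1, c1⟩ := ih1
      obtain ⟨p2, c2⟩ := ih2
      have hT := Chebyshev.T_add_two R n
      have hU := Chebyshev.U_add_two R ((n : ℤ) - 1)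
      constructor
      · linear_combination (norm := ring_nf)
          (Chebyshev.T R ((n : ℤ) + 2) + 2 * X * Chebyshev.T R ((n : ℤ) + 1) - Chebyshev.T R n) * hT
          - ((X : R[X]) ^ 2 - 1) * (Chebyshev.U R ((n : ℤ) + 1) + 2 * X * Chebyshev.U R n
              - Chebyshev.U R ((n : ℤ) - 1)) * hU
          + 4 * (X : R[X]) ^ 2 * p1 - 4 * (X : R[X]) * c1 + p2
      · linear_combination (norm := ring_nf)
          Chebyshev.T R ((n : ℤ) + 1) * hT
          - ((X : R[X]) ^ 2 - 1) * Chebyshev.U R (n : ℤ) * hU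
          + 2 * (X : R[X]) * p1 - c1
  | neg_add_one n ih1 ih2 =>
      obtain ⟨p1, c1⟩ := ih1
      obtain ⟨p2, c2⟩ := ih2
      have hT := Chebyshev.T_sub_one R (-(n : ℤ))
      have hU := Chebyshev.U_sub_one R (-(n : ℤ) - 1)
      have hP : (Chebyshev.T R (-(n : ℤ) - 1)) ^ 2 -
          (X ^ 2 - 1) * (Chebyshev.U R (-(n : ℤ) - 1 - 1)) ^ 2 = 1 := by
        linear_combination (norm := ring_nf)
          (Chebyshev.T R (-(n : ℤ) - 1) + 2 * X * Chebyshev.T R (-(n : ℤ))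
            - Chebyshev.T R (-(n : ℤ) + 1)) * hT
          - ((X : R[X]) ^ 2 - 1) * (Chebyshev.U R (-(n : ℤ) - 2) + 2 * X * Chebyshev.U R (-(n : ℤ) - 1)
              - Chebyshev.U R (-(n : ℤ))) * hU
          + 4 * (X : R[X]) ^ 2 * p1 - 4 * (X : R[X]) * c2 + p2
      refine ⟨hP, ?_⟩
      have hT1 := Chebyshev.T_sub_one R (-(n : ℤ) - 1)
      have hU1 := Chebyshev.U_sub_one R (-(n : ℤ) - 2)
      linear_combination (norm := ring_nf)
        Chebyshev.T R (-(n : ℤ) - 1) * hT1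
        - ((X : R[X]) ^ 2 - 1) * Chebyshev.U R (-(n : ℤ) - 2) * hU1
        + 2 * (X : R[X]) * hP - c1

theorem stmt_5 {K : Type*} [Field K] (hchar : (2 : K) ≠ 0)
    (a b c s : K) (ha : a ≠ 0) (hD : b ^ 2 - 4 * a * c ≠ 0)
    (hs : s ^ 2 = b ^ 2 - 4 * a * c)
    (n : ℕ) (hn : 1 ≤ n) (ε δ : K) (hε : ε = 1 ∨ ε = -1) (hδ : δ = 1 ∨ δ = -1) :
    (C a * X ^ 2 + C b * X + C c).comp
        (C (2 * a)⁻¹ *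
          (C (ε * s) * (Chebyshev.T K n).comp (C s⁻¹ * (C (2 * a) * X + C b)) - C b)) =
      (C a * X ^ 2 + C b * X + C c) *
        (C δ * (Chebyshev.U K ((n : ℤ) - 1)).comp (C s⁻¹ * (C (2 * a) * X + C b))) ^ 2 := by
  have h2a : (2 * a : K) ≠ 0 := mul_ne_zero hchar ha
  have hs0 : s ≠ 0 := fun h => hD (by rw [← hs, h]; ring)
  have key : ((Chebyshev.T K (n : ℤ)).comp (C s⁻¹ * (C (2 * a) * X + C b))) ^ 2 - 1 =
      ((C s⁻¹ * (C (2 * a) * X + C b)) ^ 2 - 1) *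
        ((Chebyshev.U K ((n : ℤ) - 1)).comp (C s⁻¹ * (C (2 * a) * X + C b))) ^ 2 := by
    have h := congrArg (fun q : K[X] => q.comp (C s⁻¹ * (C (2 * a) * X + C b)))
      (cheb_pell K (n : ℤ)).1
    simp only [sub_comp, mul_comp, pow_comp, X_comp, one_comp] at h
    linear_combination h
  have h1 : (2 : K[X]) * C a * C ((2 * a)⁻¹) = 1 := by
    rw [← map_ofNat (C : K →+* K[X]) 2, ← C_mul, ← C_mul, mul_inv_cancel₀ h2a, C_1]
  have h2 : (C s⁻¹ : K[X]) * C s = 1 := by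
    rw [← C_mul, inv_mul_cancel₀ hs0, C_1]
  have hsC : (C s : K[X]) ^ 2 = C b ^ 2 - 4 * C a * C c := by
    rw [← C_pow, hs]
    simp only [map_sub, C_pow, C_mul, map_ofNat]
  have he : (C ε : K[X]) ^ 2 = 1 := by
    rcases hε with rfl | rfl <;> simp
  have hd : (C δ : K[X]) ^ 2 = 1 := by
    rcases hδ with rfl | rfl <;> simp
  have hM : (C (2 * a) : K[X]) = 2 * C a := by rw [C_mul, map_ofNat]
  have hW : (C (ε * s) : K[X]) = C ε * C s := C_mul
  rw [hM] at key
  simp only [add_comp, mul_comp, pow_comp, X_comp, C_comp, hM, hW]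
  set T : K[X] := (Chebyshev.T K (n : ℤ)).comp (C s⁻¹ * (2 * C a * X + C b)) with hT
  set U : K[X] := (Chebyshev.U K ((n : ℤ) - 1)).comp (C s⁻¹ * (2 * C a * X + C b)) with hU
  linear_combination (norm := ring_nf)
    (C a * C ((2 * a)⁻¹) ^ 2 * C s ^ 2 * T ^ 2) * he
    + (-(C a * X ^ 2 + C b * X + C c) * U ^ 2) * hd
    + (-(C b * C ((2 * a)⁻¹) * C ε * C s * T) + C b ^ 2 * C ((2 * a)⁻¹)
        - C c * (2 * C a * C ((2 * a)⁻¹) + 1)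
        + (C a * X ^ 2 + C b * X + C c) * U ^ 2 * (2 * C a * C ((2 * a)⁻¹) + 1)) * h1
    + (C a * C ((2 * a)⁻¹) ^ 2 * C s ^ 2) * key
    + (C a * C ((2 * a)⁻¹) ^ 2 * (2 * C a * X + C b) ^ 2 * U ^ 2 * (C s⁻¹ * C s + 1)) * h2
    + (C a * C ((2 * a)⁻¹) ^ 2 * (1 - U ^ 2)) * hsC
end

section
/- Let K be an algebraically closed field, m ≥ 2 not divisible by char(K), f ∈ K[x] nonconstant and separable, g ∈ K[x] nonconstant, and h ∈ K[x] with f(g(x)) = f(x) h(x)^m. Then at most one root α of f satisfies gcd(g(x) - α, f(x)) = 1. -/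
open Polynomial

lemma coprime_of_no_common_root {K : Type*} [Field K] [IsAlgClosed K] {p q : K[X]}
    (hp : p ≠ 0) (hroot : ∀ c : K, p.eval c = 0 → q.eval c ≠ 0) : IsCoprime p q := by
  classical
  by_contra hnc
  have hgu : ¬ IsUnit (EuclideanDomain.gcd p q) := fun hu =>
    hnc (EuclideanDomain.gcd_isUnit_iff.mp hu)
  have hg0 : EuclideanDomain.gcd p q ≠ 0 := by
    intro h0
    exact hp (EuclideanDomain.gcd_eq_zero_iff.mp h0).1
  have hdeg : (EuclideanDomain.gcd p q).degree ≠ 0 := fun hd =>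
    hgu (Polynomial.isUnit_iff_degree_eq_zero.mpr hd)
  obtain ⟨c, hc⟩ := IsAlgClosed.exists_root _ hdeg
  have hcp : p.eval c = 0 :=
    Polynomial.eval_eq_zero_of_dvd_of_eval_eq_zero (EuclideanDomain.gcd_dvd_left p q) hc
  have hcq : q.eval c = 0 :=
    Polynomial.eval_eq_zero_of_dvd_of_eval_eq_zero (EuclideanDomain.gcd_dvd_right p q) hc
  exact hroot c hcp hcq

lemma pow_rep {K : Type*} [Field K] [IsAlgClosed K] (m : ℕ) (hm0 : 0 < m)
    (f g h : K[X]) (hf : f.Separable)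
    (hgd : 0 < g.natDegree) (heq : f.comp g = f * h ^ m)
    (α : K) (hα : f.IsRoot α) (hcα : IsCoprime (g - C α) f) :
    ∃ U : K[X], U ^ m = g - C α := by
  have hgne : g - C α ≠ 0 := by
    intro h0
    have : (g - C α).natDegree = g.natDegree := natDegree_sub_C
    rw [h0, natDegree_zero] at this
    omega
  set f1 := f /ₘ (X - C α) with hf1def
  have hf1 : (X - C α) * f1 = f := mul_divByMonic_eq_iff_isRoot.mpr hα
  have hα1 : f1.eval α ≠ 0 := by
    intro h0
    have hdvd : (X - C α) ∣ f1 := dvd_iff_isRoot.mpr h0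
    obtain ⟨r, hr⟩ := hdvd
    have : (X - C α) * (X - C α) ∣ f := ⟨r, by rw [← hf1, hr, mul_assoc]⟩
    exact (Polynomial.not_isUnit_X_sub_C α) (hf.squarefree _ this)
  have hcomp : (g - C α) * (f1.comp g) = f * h ^ m := by
    rw [← heq, ← hf1, mul_comp, sub_comp, X_comp, C_comp]
  have hcop1 : IsCoprime (g - C α) (f1.comp g) := by
    apply coprime_of_no_common_root hgne
    intro c hc hq
    have hgc : g.eval c = α := by simpa [eval_sub, eval_C, sub_eq_zero] using hc
    rw [eval_comp, hgc] at hq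
    exact hα1 hq
  have hd : (g - C α) ∣ h ^ m := by
    apply hcα.dvd_of_dvd_mul_left
    exact ⟨f1.comp g, hcomp.symm⟩
  obtain ⟨t, ht⟩ := hd
  have hcopt : IsCoprime (g - C α) t := by
    have heq2 : f1.comp g = f * t := by
      have : (g - C α) * (f1.comp g) = (g - C α) * (f * t) := by
        rw [hcomp, ht]; ring
      exact mul_left_cancel₀ hgne this
    rw [heq2] at hcop1
    exact hcop1.of_mul_right_right
  obtain ⟨d, hd⟩ := exists_associated_pow_of_mul_eq_pow' hcopt ht.symm
  obtain ⟨u, hu⟩ := hd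
  obtain ⟨k, hk0, hk⟩ : ∃ k : K, k ≠ 0 ∧ (u : K[X]) = C k := by
    obtain ⟨k, hk0, hk⟩ := Polynomial.isUnit_iff.mp u.isUnit
    exact ⟨k, hk0.ne_zero, hk.symm⟩
  obtain ⟨z, hz⟩ := IsAlgClosed.exists_pow_nat_eq k hm0
  exact ⟨C z * d, by rw [mul_pow, ← C_pow, hz, ← hk, mul_comm, hu]⟩

theorem stmt_8 {K : Type*} [Field K] [IsAlgClosed K] (m : ℕ) (hm : 2 ≤ m)
    (hchar : (m : K) ≠ 0) (f g h : K[X]) (hf : f.Separable) (hfd : 0 < f.natDegree)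
    (hgd : 0 < g.natDegree) (heq : f.comp g = f * h ^ m)
    (α β : K) (hα : f.IsRoot α) (hβ : f.IsRoot β)
    (hcα : IsCoprime (g - C α) f) (hcβ : IsCoprime (g - C β) f) :
    α = β := by
  by_contra hne
  have hm0 : 0 < m := by omega
  obtain ⟨U, hU⟩ := pow_rep m hm0 f g h hf hgd heq α hα hcα
  obtain ⟨V, hV⟩ := pow_rep m hm0 f g h hf hgd heq β hβ hcβ
  have hUd : 0 < U.natDegree := by
    have hUg : m * U.natDegree = g.natDegree := by
      rw [← natDegree_pow, hU, natDegree_sub_C]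
    by_contra h0
    push_neg at h0
    have h0' : U.natDegree = 0 := by omega
    rw [h0', mul_zero] at hUg
    omega
  have hVd : 0 < V.natDegree := by
    have hVg : m * V.natDegree = g.natDegree := by
      rw [← natDegree_pow, hV, natDegree_sub_C]
    by_contra h0
    push_neg at h0
    have h0' : V.natDegree = 0 := by omega
    rw [h0', mul_zero] at hVg
    omega
  have hdiff : U ^ m - V ^ m = C (β - α) := by
    rw [hU, hV, C_sub]; ring
  have hne' : C (β - α) ≠ (0 : K[X]) := by
    simp only [Ne, C_eq_zero, sub_eq_zero]
    exact fun hh => hne hh.symm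
  -- find a root of unity ζ ≠ 1
  obtain ⟨ζ, hζm, hζ1⟩ : ∃ ζ : K, ζ ^ m = 1 ∧ ζ ≠ 1 := by
    set q : K[X] := ∑ i ∈ Finset.range m, X ^ i with hq
    have hmono : q.Monic := monic_geom_sum_X (by omega)
    have hcoeff : q.coeff (m - 1) = 1 := by
      rw [hq, finset_sum_coeff]
      rw [Finset.sum_eq_single (m - 1)]
      · simp
      · intro b _ hb
        rw [coeff_X_pow]
        simp only [ite_eq_right_iff]
        intro hh
        exact absurd hh.symm hb
      · intro hmem
        exact absurd (Finset.mem_range.mpr (by omega)) hmem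
    have hqnd : 0 < q.natDegree := by
      have := le_natDegree_of_ne_zero (hcoeff ▸ one_ne_zero)
      omega
    have hqd : q.degree ≠ 0 := (natDegree_pos_iff_degree_pos.mp hqnd).ne'
    obtain ⟨c, hc⟩ := IsAlgClosed.exists_root q hqd
    have hc' : (∑ i ∈ Finset.range m, c ^ i) = 0 := by
      simpa [hq, IsRoot, eval_finset_sum] using hc
    have hgeo := geom_sum_mul c m
    rw [hc', zero_mul] at hgeo
    have hcm : c ^ m = 1 := by linear_combination -hgeo
    refine ⟨c, hcm, fun hc1 => ?_⟩
    rw [hc1] at hc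
    have : q.eval 1 = (m : K) := by simp [hq]
    rw [IsRoot, this] at hc
    exact hchar hc
  have h1 : U - V ∣ C (β - α) := by
    rw [← hdiff]; exact sub_dvd_pow_sub_pow U V m
  have h2 : U - C ζ * V ∣ C (β - α) := by
    rw [← hdiff]
    have hdd := sub_dvd_pow_sub_pow U (C ζ * V) m
    have he : (C ζ * V) ^ m = V ^ m := by
      rw [mul_pow, ← C_pow, hζm, C_1, one_mul]
    rwa [he] at hdd
  have hd1 : (U - V).natDegree = 0 := by
    rcases eq_or_ne (U - V) 0 with h0 | h0
    · rw [h0, natDegree_zero]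
    · have := Polynomial.natDegree_le_of_dvd h1 hne'
      rw [natDegree_C] at this
      omega
  have hd2 : (U - C ζ * V).natDegree = 0 := by
    rcases eq_or_ne (U - C ζ * V) 0 with h0 | h0
    · rw [h0, natDegree_zero]
    · have := Polynomial.natDegree_le_of_dvd h2 hne'
      rw [natDegree_C] at this
      omega
  obtain ⟨a, ha⟩ := natDegree_eq_zero.mp hd1
  obtain ⟨b, hb⟩ := natDegree_eq_zero.mp hd2
  have hVconst : C (1 - ζ) * V = C b - C a := by
    rw [C_sub, C_1]
    linear_combination ha - hb
  have hV0 : V ≠ 0 := fun h0 => by rw [h0, natDegree_zero] at hVd; omega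
  have hcc : C (1 - ζ) ≠ (0 : K[X]) := by
    simp only [Ne, C_eq_zero, sub_eq_zero]
    exact fun hh => hζ1 hh.symm
  have := congrArg natDegree hVconst
  rw [natDegree_mul hcc hV0, natDegree_C, ← C_sub, natDegree_C] at this
  omega
end

section
/- Let f(x) = a x^2 + b x + c ∈ ℚ[x] with a ≠ 0 and discriminant D = b^2 - 4ac ≠ 0. Then the polynomials g(x) = (16a^2 x^3 + 24ab x^2 + (9b^2 + 12ac) x + 8bc)/D and h(x) = (16a^2 x^2 + 16ab x + 3b^2 + 4ac)/D satisfy f(g(x)) = f(x) h(x)^2 in ℚ[x]. -/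
open Polynomial

theorem stmt_16 (a b c : ℚ) (ha : a ≠ 0) (hD : b ^ 2 - 4 * a * c ≠ 0) :
    (C a * X ^ 2 + C b * X + C c).comp
        (C (b ^ 2 - 4 * a * c)⁻¹ *
          (C (16 * a ^ 2) * X ^ 3 + C (24 * a * b) * X ^ 2 +
            C (9 * b ^ 2 + 12 * a * c) * X + C (8 * b * c))) =
      (C a * X ^ 2 + C b * X + C c) *
        (C (b ^ 2 - 4 * a * c)⁻¹ *
          (C (16 * a ^ 2) * X ^ 2 + C (16 * a * b) * X + C (3 * b ^ 2 + 4 * a * c))) ^ 2 := by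
  apply Polynomial.funext
  intro x
  simp only [eval_comp, eval_mul, eval_add, eval_pow, eval_C, eval_X]
  have hD' : b ^ 2 - a * 4 * c ≠ 0 := by convert hD using 2; ring
  field_simp
  ring
end

section
/- There do not exist polynomials f, g, h ∈ ℚ[x] with f separable, deg f ≥ 3, deg g ≥ 2, such that f(g(x)) = f(x) h(x)^2. -/
open Polynomial

theorem stmt_17 : ¬ ∃ f g h : ℚ[X], f.Separable ∧ 3 ≤ f.natDegree ∧ 2 ≤ g.natDegree ∧
    f.comp g = f * h ^ 2 := by
  rintro ⟨f, g, h, hsep, hf3, hg2, heq⟩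
  have hf0 : f ≠ 0 := fun hf => by simp [hf] at hf3
  have hg0 : g ≠ 0 := fun hg => by simp [hg] at hg2
  -- composition is nonzero
  have hcomp0 : f.comp g ≠ 0 := by
    intro hc
    have := natDegree_comp (p := f) (q := g) ▸ congrArg natDegree hc
    simp only [natDegree_zero] at this
    rcases Nat.mul_eq_zero.mp this with h1 | h1 <;> omega
  have hh0 : h ≠ 0 := by
    rintro rfl
    simp [heq] at hcomp0
  -- coprimality of f∘g and f'∘g
  have hcop : IsCoprime (f.comp g) ((derivative f).comp g) := by
    obtain ⟨u, v, huv⟩ := hsep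
    refine ⟨u.comp g, v.comp g, ?_⟩
    have := congrArg (fun p => p.comp g) huv
    simpa [add_comp, mul_comp] using this
  -- h divides f ∘ g
  have hdvd1 : h ∣ f.comp g := heq ▸ Dvd.intro_left (f * h) (by ring)
  -- h divides derivative (f ∘ g)
  have hdvd2 : h ∣ derivative (f.comp g) := by
    rw [heq, derivative_mul, derivative_pow]
    exact dvd_add ((dvd_pow_self h two_ne_zero).mul_left _)
      ((((dvd_pow_self h one_ne_zero).mul_left _).mul_right _).mul_left _)
  -- hence h is coprime to f' ∘ g, so h ∣ g'
  have hcop2 : IsCoprime h ((derivative f).comp g) := hcop.of_isCoprime_of_dvd_left hdvd1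
  have hdvdg' : h ∣ derivative g := by
    have := hdvd2
    rw [derivative_comp] at this
    exact hcop2.dvd_of_dvd_mul_right this
  -- g' ≠ 0
  have hg'0 : derivative g ≠ 0 := fun hd => by
    have := natDegree_eq_zero_of_derivative_eq_zero hd
    omega
  have hdeg_h : h.natDegree ≤ g.natDegree - 1 :=
    le_trans (natDegree_le_of_dvd hdvdg' hg'0) (natDegree_derivative_le g)
  -- degree count
  have hdeg : f.natDegree * g.natDegree = f.natDegree + 2 * h.natDegree := by
    have := congrArg natDegree heq
    rwa [natDegree_comp, natDegree_mul hf0 (pow_ne_zero 2 hh0), natDegree_pow] at this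
  -- contradiction
  have hle : h.natDegree + 1 ≤ g.natDegree := by omega
  nlinarith [hdeg, hf3, hg2, hle]
end
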